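/- Let K be a non-archimedean local field of characteristic p, m ≥ 2 an integer with p ∤ m, and g(x, y) = y^m - f(x) where f(x) = γ_0 ∏_{i=1}^k (x - γ_i)^{n_i} ∈ O_K[x] splits completely over K with γ_0 ≠ 0. Let T = {i : γ_i ∈ O_K} and suppose T = ∅. Then the reduction of g_1(x, y) := σ f_1(x) + δ y^m modulo the maximal ideal, where σ ∈ O_K^× and f_1 ∈ A_K (so f_1(0) ∈ O_K^×) and δ ∈ O_K, has no singular point over the residue field F_q; consequently every candidate pole of the local zeta function Z_g(s, χ) contributed by the stationary phase formula at this stage has real part -1. -/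

import Mathlib

/-! The reduction `σ̄ c̄ + δ̄ y^m` has `∂/∂y = m δ̄ y^(m-1)`; since `m` is a unit in `F_q`, a common
zero would force `δ̄ y^m = 0` and hence `σ̄ c̄ = 0`. The candidate poles satisfy `|q^{-1-s}| = 1`, i.e.
`q^{-1-Re s} = 1`, and `q > 1` gives `Re s = -1`. -/

theorem add_mul_pow_ne_zero_of_mul_natCast_mul_pow_pred_eq_zero {F : Type*} [Field F]
    {c b y : F} {m : ℕ} (hc : c ≠ 0) (hm : (m : F) ≠ 0)
    (hderiv : b * ((m : F) * y ^ (m - 1)) = 0) : c + b * y ^ m ≠ 0 := by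
  have hm₀ : m ≠ 0 := by rintro rfl; exact hm Nat.cast_zero
  have hby : b * y ^ (m - 1) = 0 := by
    rw [mul_left_comm] at hderiv
    exact (mul_eq_zero.mp hderiv).resolve_left hm
  have hbym : b * y ^ m = 0 := by
    rw [← Nat.sub_add_cancel (Nat.one_le_iff_ne_zero.mpr hm₀), pow_succ, ← mul_assoc, hby,
      zero_mul]
  rwa [hbym, add_zero]

namespace MvPolynomial

theorem eval_C_add_C_mul_X_pow_ne_zero_of_eval_pderiv_eq_zero {σ F : Type*} [Field F]
    {c b : F} {m : ℕ} (hc : c ≠ 0) (hm : (m : F) ≠ 0) (i : σ) (P : σ → F)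
    (hderiv : eval P (pderiv i (C c + C b * X i ^ m)) = 0) :
    eval P (C c + C b * X i ^ m) ≠ 0 := by
  simp only [map_add, map_mul, derivation_C, Derivation.leibniz, Derivation.leibniz_pow,
    pderiv_X_self, smul_eq_mul, nsmul_eq_mul, mul_one, mul_zero, add_zero, zero_add, eval_C,
    eval_X, map_natCast, map_pow] at hderiv ⊢
  exact add_mul_pow_ne_zero_of_mul_natCast_mul_pow_pred_eq_zero hc hm hderiv

end MvPolynomial

theorem Complex.re_eq_zero_of_natCast_cpow_eq_one {n : ℕ} (hn : 1 < n) {z : ℂ}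
    (h : (n : ℂ) ^ z = 1) : z.re = 0 := by
  have hnorm := norm_natCast_cpow_of_pos (by omega : 0 < n) z
  rwa [h, norm_one, ← Real.rpow_zero (n : ℝ),
    Real.rpow_right_inj (by positivity) (by exact_mod_cast hn.ne'), eq_comm] at hnorm

open MvPolynomial in
theorem stmt_19_general {F : Type*} [Field F] [Fintype F] {p : ℕ} [CharP F p]
    (q : ℕ) (hq : q = Fintype.card F)
    (m : ℕ) (hpm : ¬ p ∣ m)
    (σbar cbar δbar : F) (hσ : σbar ≠ 0) (hc : cbar ≠ 0) :
    (¬ ∃ P : Fin 2 → F,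
      eval P (C (σbar * cbar) + C δbar * X 1 ^ m : MvPolynomial (Fin 2) F) = 0 ∧
      eval P (pderiv 0 (C (σbar * cbar) + C δbar * X 1 ^ m : MvPolynomial (Fin 2) F)) = 0 ∧
      eval P (pderiv 1 (C (σbar * cbar) + C δbar * X 1 ^ m : MvPolynomial (Fin 2) F)) = 0) ∧
    ∀ s : ℂ, (q : ℂ) ^ (-1 - s) = 1 → s.re = -1 := by
  constructor
  · rintro ⟨P, hval, -, hdy⟩
    have hmF : (m : F) ≠ 0 := by rwa [Ne, CharP.cast_eq_zero_iff F p]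
    exact eval_C_add_C_mul_X_pow_ne_zero_of_eval_pderiv_eq_zero (mul_ne_zero hσ hc) hmF 1 P
      hdy hval
  · intro s hs
    have hq₁ : 1 < q := hq ▸ Fintype.one_lt_card
    have hre := Complex.re_eq_zero_of_natCast_cpow_eq_one hq₁ hs
    simp only [Complex.sub_re, Complex.neg_re, Complex.one_re] at hre
    linarith

open MvPolynomial in
theorem stmt_19 {F : Type*} [Field F] [Fintype F] {p : ℕ} [CharP F p]
    (q : ℕ) (hq : q = Fintype.card F)
    (m : ℕ) (hm : 2 ≤ m) (hpm : ¬ p ∣ m)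
    (σbar cbar δbar : F) (hσ : σbar ≠ 0) (hc : cbar ≠ 0) :
    (¬ ∃ P : Fin 2 → F,
      eval P (C (σbar * cbar) + C δbar * X 1 ^ m : MvPolynomial (Fin 2) F) = 0 ∧
      eval P (pderiv 0 (C (σbar * cbar) + C δbar * X 1 ^ m : MvPolynomial (Fin 2) F)) = 0 ∧
      eval P (pderiv 1 (C (σbar * cbar) + C δbar * X 1 ^ m : MvPolynomial (Fin 2) F)) = 0) ∧
    ∀ s : ℂ, (q : ℂ) ^ (-1 - s) = 1 → s.re = -1 :=
  stmt_19_general q hq m hpm σbar cbar δbar hσ hc
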